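/- Let D ∈ ℕ and let μ be a solution of the sender–receiver differential system on [0,∞) supported in {0,…,D}, i.e. μ_t(i) = 0 for all i > D and all t ≥ 0. Then the function t ↦ ∑_{i≥1} μ_t(i) is integrable on [0,∞), and the spatial-reuse integral satisfies λ·∫₀^∞ ∑_{i≥1} μ_t(i) dt ≤ ∑_i μ_0(i). -/

import Mathlib

/-- Total mass `S₀ = ∑_j μ(j)`. -/
noncomputable def S0 (μ : ℕ → ℝ) : ℝ := ∑' (j : ℕ), μ j

/-- First moment `S₁ = ∑_j j·μ(j)`. -/
noncomputable def S1 (μ : ℕ → ℝ) : ℝ := ∑' (j : ℕ), (j : ℝ) * μ j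

/-- Second moment `S₂ = ∑_j j²·μ(j)`. -/
noncomputable def S2 (μ : ℕ → ℝ) : ℝ := ∑' (j : ℕ), (j : ℝ) ^ 2 * μ j

/-- The degree distribution `α(i) = μ(i)/S₀`. -/
noncomputable def alphaM (μ : ℕ → ℝ) (i : ℕ) : ℝ := μ i / S0 μ

/-- The size-biased distribution `β(i) = i·μ(i)/S₁`. -/
noncomputable def betaM (μ : ℕ → ℝ) (i : ℕ) : ℝ := (i : ℝ) * μ i / S1 μ

/-- The sender–receiver drift
`F_i(μ) = −λ·S₀·[ α(i) + β(i)·(∑_j j·α(j) + (1−α(0))·∑_j (j−1)·β(j))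
  + (β(i) − β(i+1))·(∑_j (j−1)·β(j))·(∑_j j·α(j) + (1−α(0))·∑_j (j−2)·β(j)) ]`. -/
noncomputable def F (lam : ℝ) (μ : ℕ → ℝ) (i : ℕ) : ℝ :=
  -lam * S0 μ *
    (alphaM μ i
      + betaM μ i * ((∑' (j : ℕ), (j : ℝ) * alphaM μ j)
          + (1 - alphaM μ 0) * ∑' (j : ℕ), ((j : ℝ) - 1) * betaM μ j)
      + (betaM μ i - betaM μ (i + 1)) * (∑' (j : ℕ), ((j : ℝ) - 1) * betaM μ j)
          * ((∑' (j : ℕ), (j : ℝ) * alphaM μ j)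
              + (1 - alphaM μ 0) * ∑' (j : ℕ), ((j : ℝ) - 2) * betaM μ j))

/-- A solution of the sender–receiver differential system on the time domain
`D ⊆ ℝ`: a family `(μ_t)` of nonnegative functions `ℕ → ℝ` with finite moments
`S₀, S₁, S₂`, with `S₀ > 0` and `S₁ > 0`, such that each coordinate
`t ↦ μ_t(i)` is differentiable with `d/dt μ_t(i) = F_i(μ_t)` on `D`. -/
def IsSRSolution (lam : ℝ) (D : Set ℝ) (μ : ℝ → ℕ → ℝ) : Prop :=
  ∀ t ∈ D,
    (∀ i, 0 ≤ μ t i) ∧ Summable (μ t) ∧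
      (Summable fun j : ℕ => (j : ℝ) * μ t j) ∧
      (Summable fun j : ℕ => (j : ℝ) ^ 2 * μ t j) ∧
      0 < S0 (μ t) ∧ 0 < S1 (μ t) ∧
      ∀ i, HasDerivAt (fun s => μ s i) (F lam (μ t) i) t

lemma sumF_eq (lam : ℝ) (D : ℕ) (ν : ℕ → ℝ)
    (hS0 : 0 < S0 ν) (hS1 : 0 < S1 ν)
    (hsupp : ∀ i, D < i → ν i = 0) :
    ∑ i ∈ Finset.range (D + 1), F lam ν i
      = -lam * S0 ν * (1 + ((∑' (j : ℕ), (j : ℝ) * alphaM ν j)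
          + (1 - alphaM ν 0) * ∑' (j : ℕ), ((j : ℝ) - 1) * betaM ν j)) := by
  set A := ∑' (j : ℕ), (j : ℝ) * alphaM ν j with hA
  set B := ∑' (j : ℕ), ((j : ℝ) - 1) * betaM ν j with hB
  set B2 := ∑' (j : ℕ), ((j : ℝ) - 2) * betaM ν j with hB2
  have hα : ∑ i ∈ Finset.range (D + 1), alphaM ν i = 1 := by
    simp only [alphaM]
    rw [← Finset.sum_div]
    have h1 : ∑ i ∈ Finset.range (D + 1), ν i = S0 ν := by
      rw [S0, tsum_eq_sum]
      intro b hb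
      simp only [Finset.mem_range, not_lt] at hb
      exact hsupp b hb
    rw [h1, div_self hS0.ne']
  have hβ : ∑ i ∈ Finset.range (D + 1), betaM ν i = 1 := by
    simp only [betaM]
    rw [← Finset.sum_div]
    have h1 : ∑ i ∈ Finset.range (D + 1), (i : ℝ) * ν i = S1 ν := by
      rw [S1, tsum_eq_sum]
      intro b hb
      simp only [Finset.mem_range, not_lt] at hb
      rw [hsupp b hb, mul_zero]
    rw [h1, div_self hS1.ne']
  have htel : ∑ i ∈ Finset.range (D + 1), (betaM ν i - betaM ν (i + 1)) = 0 := by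
    rw [Finset.sum_range_sub' (fun i => betaM ν i)]
    have h1 : betaM ν 0 = 0 := by simp [betaM]
    have h2 : betaM ν (D + 1) = 0 := by
      simp [betaM, hsupp (D + 1) (Nat.lt_succ_self D)]
    rw [h1, h2, sub_zero]
  calc ∑ i ∈ Finset.range (D + 1), F lam ν i
      = ∑ i ∈ Finset.range (D + 1), (-lam * S0 ν) *
          (alphaM ν i + betaM ν i * (A + (1 - alphaM ν 0) * B)
            + (betaM ν i - betaM ν (i + 1)) * (B * (A + (1 - alphaM ν 0) * B2))) := by
        refine Finset.sum_congr rfl fun i _ => ?_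
        simp only [F, ← hA, ← hB, ← hB2]; ring
    _ = (-lam * S0 ν) * ∑ i ∈ Finset.range (D + 1),
          (alphaM ν i + betaM ν i * (A + (1 - alphaM ν 0) * B)
            + (betaM ν i - betaM ν (i + 1)) * (B * (A + (1 - alphaM ν 0) * B2))) :=
        (Finset.mul_sum _ _ _).symm
    _ = (-lam * S0 ν) * ((∑ i ∈ Finset.range (D + 1), alphaM ν i)
          + (∑ i ∈ Finset.range (D + 1), betaM ν i) * (A + (1 - alphaM ν 0) * B)
          + (∑ i ∈ Finset.range (D + 1), (betaM ν i - betaM ν (i + 1)))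
              * (B * (A + (1 - alphaM ν 0) * B2))) := by
        rw [Finset.sum_add_distrib, Finset.sum_add_distrib, ← Finset.sum_mul, ← Finset.sum_mul]
    _ = -lam * S0 ν * (1 + (A + (1 - alphaM ν 0) * B)) := by
        rw [hα, hβ, htel]; ring

lemma sumF_le (lam : ℝ) (hlam : 0 < lam) (D : ℕ) (ν : ℕ → ℝ)
    (hnn : ∀ i, 0 ≤ ν i) (hs0 : Summable ν)
    (hS0 : 0 < S0 ν) (hS1 : 0 < S1 ν)
    (hsupp : ∀ i, D < i → ν i = 0) :
    ∑ i ∈ Finset.range (D + 1), F lam ν i ≤ -lam * ∑' (i : ℕ), ν (i + 1) := by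
  have hA : 0 ≤ ∑' (j : ℕ), (j : ℝ) * alphaM ν j :=
    tsum_nonneg fun j => mul_nonneg (Nat.cast_nonneg j) (div_nonneg (hnn j) hS0.le)
  have hB : 0 ≤ ∑' (j : ℕ), ((j : ℝ) - 1) * betaM ν j := by
    refine tsum_nonneg fun j => ?_
    rcases Nat.eq_zero_or_pos j with h | h
    · subst h; simp [betaM]
    · refine mul_nonneg ?_ (div_nonneg (mul_nonneg (Nat.cast_nonneg j) (hnn j)) hS1.le)
      have : (1 : ℝ) ≤ (j : ℝ) := by exact_mod_cast h
      linarith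
  have hα0 : alphaM ν 0 ≤ 1 := by
    rw [alphaM, div_le_one hS0]
    exact Summable.le_tsum hs0 0 fun j _ => hnn j
  have hzero : S0 ν = ν 0 + ∑' (i : ℕ), ν (i + 1) := by
    rw [S0]; exact Summable.tsum_eq_zero_add hs0
  have hh : ∑' (i : ℕ), ν (i + 1) ≤ S0 ν := by
    have := hnn 0; linarith
  have hhnn : 0 ≤ ∑' (i : ℕ), ν (i + 1) := tsum_nonneg fun i => hnn _
  rw [sumF_eq lam D ν hS0 hS1 hsupp]
  have hc1 : 0 ≤ (∑' (j : ℕ), (j : ℝ) * alphaM ν j)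
      + (1 - alphaM ν 0) * ∑' (j : ℕ), ((j : ℝ) - 1) * betaM ν j :=
    add_nonneg hA (mul_nonneg (by linarith) hB)
  nlinarith [mul_pos hlam hS0, mul_nonneg (mul_pos hlam hS0).le hc1,
    mul_le_mul_of_nonneg_left hh hlam.le]

open MeasureTheory

/-- For a solution of the sender–receiver differential system on `[0,∞)`
supported in `{0,…,D}`, the function `t ↦ ∑_{i≥1} μ_t(i)` is integrable on
`[0,∞)` and the spatial-reuse integral satisfies
`λ·∫₀^∞ ∑_{i≥1} μ_t(i) dt ≤ ∑_i μ_0(i)`. -/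
theorem sr_solution_spatial_reuse_le (lam : ℝ) (hlam : 0 < lam) (D : ℕ)
    (μ : ℝ → ℕ → ℝ)
    (hsol : IsSRSolution lam (Set.Ici 0) μ)
    (hsupp : ∀ t, 0 ≤ t → ∀ i, D < i → μ t i = 0) :
    IntegrableOn (fun t => ∑' (i : ℕ), μ t (i + 1)) (Set.Ici 0) ∧
      lam * ∫ t in Set.Ici (0 : ℝ), ∑' (i : ℕ), μ t (i + 1)
        ≤ ∑' (i : ℕ), μ 0 i := by
  classical
  set g : ℝ → ℝ := fun t => ∑ i ∈ Finset.range (D + 1), μ t i with hg_def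
  set h : ℝ → ℝ := fun t => ∑ i ∈ Finset.range D, μ (max t 0) (i + 1) with hh_def
  have hcont : Continuous h := by
    rw [continuous_iff_continuousAt]
    intro t
    have hm : (0 : ℝ) ≤ max t 0 := le_max_right _ _
    obtain ⟨-, -, -, -, -, -, hd⟩ := hsol _ hm
    have h0 : ContinuousAt (fun s => ∑ i ∈ Finset.range D, μ s (i + 1)) (max t 0) :=
      tendsto_finset_sum _ fun i _ => (hd (i + 1)).continuousAt
    have hmaxc : ContinuousAt (fun s : ℝ => max s 0) t :=
      (continuous_id.max continuous_const).continuousAt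
    have hc : ContinuousAt ((fun s => ∑ i ∈ Finset.range D, μ s (i + 1)) ∘ fun s : ℝ => max s 0) t :=
      ContinuousAt.comp (f := fun s : ℝ => max s 0) (x := t) h0 hmaxc
    exact hc
  have hhnn : ∀ t, 0 ≤ h t :=
    fun t => Finset.sum_nonneg fun i _ => (hsol _ (Set.mem_Ici.mpr (le_max_right t 0))).1 _
  have hheq : ∀ t, 0 ≤ t → (∑' (i : ℕ), μ t (i + 1)) = h t := by
    intro t ht
    have : max t 0 = t := max_eq_left ht
    rw [hh_def]
    simp only [this]
    refine tsum_eq_sum fun i hi => ?_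
    simp only [Finset.mem_range, not_lt] at hi
    exact hsupp t ht (i + 1) (by omega)
  have hgder : ∀ t, 0 ≤ t →
      HasDerivAt g (∑ i ∈ Finset.range (D + 1), F lam (μ t) i) t := by
    intro t ht
    obtain ⟨-, -, -, -, -, -, hd⟩ := hsol t ht
    exact HasDerivAt.fun_sum fun i _ => hd i
  have hFle : ∀ t, 0 ≤ t →
      ∑ i ∈ Finset.range (D + 1), F lam (μ t) i ≤ -lam * h t := by
    intro t ht
    obtain ⟨hnn, hs0, hs1, -, hS0, hS1, -⟩ := hsol t ht
    have := sumF_le lam hlam D (μ t) hnn hs0 hS0 hS1 (fun i hi => hsupp t ht i hi)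
    rwa [hheq t ht] at this
  set ψ : ℝ → ℝ := fun T => g T + lam * ∫ t in (0 : ℝ)..T, h t with hψ_def
  have hψder : ∀ T, 0 ≤ T →
      HasDerivAt ψ ((∑ i ∈ Finset.range (D + 1), F lam (μ T) i) + lam * h T) T := by
    intro T hT
    have hint : HasDerivAt (fun u => ∫ t in (0 : ℝ)..u, h t) (h T) T :=
      intervalIntegral.integral_hasDerivAt_right (hcont.intervalIntegrable _ _)
        (hcont.stronglyMeasurableAtFilter _ _) hcont.continuousAt
    exact (hgder T hT).add (hint.const_mul lam)
  have hanti : AntitoneOn ψ (Set.Ici 0) := by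
    apply antitoneOn_of_deriv_nonpos (convex_Ici 0)
    · intro T hT
      exact (hψder T hT).continuousAt.continuousWithinAt
    · intro T hT
      rw [interior_Ici] at hT
      exact (hψder T hT.le).differentiableAt.differentiableWithinAt
    · intro T hT
      rw [interior_Ici] at hT
      rw [(hψder T hT.le).deriv]
      have := hFle T hT.le
      linarith
  have hgnn : ∀ T, 0 ≤ T → 0 ≤ g T :=
    fun T hT => Finset.sum_nonneg fun i _ => (hsol T hT).1 i
  have hbound : ∀ T : ℝ, 0 ≤ T → ∫ t in (0 : ℝ)..T, h t ≤ g 0 / lam := by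
    intro T hT
    have h1 : ψ T ≤ ψ 0 := hanti Set.self_mem_Ici hT hT
    have h0 : ψ 0 = g 0 := by
      simp [hψ_def]
    rw [h0, hψ_def] at h1
    simp only at h1
    rw [le_div_iff₀ hlam]
    have := hgnn T hT
    nlinarith
  have hnorm : ∀ n : ℕ, (∫ x in (0 : ℝ)..(n : ℝ), ‖h x‖) ≤ g 0 / lam := by
    intro n
    have : (∫ x in (0 : ℝ)..(n : ℝ), ‖h x‖) = ∫ x in (0 : ℝ)..(n : ℝ), h x :=
      intervalIntegral.integral_congr fun x _ => Real.norm_of_nonneg (hhnn x)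
    rw [this]
    exact hbound n (Nat.cast_nonneg n)
  have hb : Filter.Tendsto (fun n : ℕ => (n : ℝ)) Filter.atTop Filter.atTop :=
    tendsto_natCast_atTop_atTop
  have hfi : ∀ n : ℕ, IntegrableOn h (Set.Ioc (0 : ℝ) (n : ℝ)) volume :=
    fun n => (hcont.integrableOn_Icc).mono_set Set.Ioc_subset_Icc_self
  have hIoi : IntegrableOn h (Set.Ioi (0 : ℝ)) volume :=
    integrableOn_Ioi_of_intervalIntegral_norm_bounded (g 0 / lam) 0 hfi hb
      (Filter.Eventually.of_forall hnorm)
  have hIci : IntegrableOn h (Set.Ici (0 : ℝ)) volume := by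
    rwa [integrableOn_Ici_iff_integrableOn_Ioi]
  have heqset : Set.EqOn h (fun t => ∑' (i : ℕ), μ t (i + 1)) (Set.Ici 0) :=
    fun t ht => (hheq t ht).symm
  constructor
  · exact hIci.congr_fun heqset measurableSet_Ici
  · have hint_eq : ∫ t in Set.Ici (0 : ℝ), ∑' (i : ℕ), μ t (i + 1)
        = ∫ t in Set.Ioi (0 : ℝ), h t := by
      rw [← setIntegral_congr_fun measurableSet_Ici heqset, integral_Ici_eq_integral_Ioi]
    have htend : Filter.Tendsto (fun n : ℕ => ∫ x in (0 : ℝ)..(n : ℝ), h x)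
        Filter.atTop (nhds (∫ x in Set.Ioi (0 : ℝ), h x)) :=
      intervalIntegral_tendsto_integral_Ioi 0 hIoi hb
    have hle : (∫ x in Set.Ioi (0 : ℝ), h x) ≤ g 0 / lam :=
      le_of_tendsto htend (Filter.Eventually.of_forall fun n => hbound n (Nat.cast_nonneg n))
    have hg0 : (∑' (i : ℕ), μ 0 i) = g 0 := by
      refine tsum_eq_sum fun i hi => ?_
      simp only [Finset.mem_range, not_lt] at hi
      exact hsupp 0 le_rfl i (by omega)
    rw [hint_eq, hg0]
    calc lam * ∫ x in Set.Ioi (0 : ℝ), h x ≤ lam * (g 0 / lam) :=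
          mul_le_mul_of_nonneg_left hle hlam.le
      _ = g 0 := by field_simp
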